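/- Let n ≥ 3 and let p, q ∈ ℝⁿ. For the Sutcliffe matrices built from p, q and the Lax matrix A(ζ) = (T₁+iT₂) − 2iT₃ζ + (T₁−iT₂)ζ², one has, for every ζ ∈ ℂ, (1/2)·Tr(A(ζ)²) = ζ²·H, where H = (1/2)(p₁² + … + pₙ²) − (exp(q₁−q₂) + exp(q₂−q₃) + … + exp(qₙ−q₁)) is the affine Toda Hamiltonian. -/

import Mathlib

open Matrix Complex

/-- The Sutcliffe matrix `T₁+iT₂`. -/
noncomputable def sutTplus (n : ℕ) [NeZero n] (q : Fin n → ℝ) :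
    Matrix (Fin n) (Fin n) ℂ :=
  Matrix.of fun i j => if j = i + 1 then (Real.exp ((q i - q (i + 1)) / 2) : ℂ) else 0

/-- The Sutcliffe matrix `T₁−iT₂ = −(T₁+iT₂)ᵀ`. -/
noncomputable def sutTminus (n : ℕ) [NeZero n] (q : Fin n → ℝ) :
    Matrix (Fin n) (Fin n) ℂ :=
  -(sutTplus n q)ᵀ

/-- The Sutcliffe matrix `T₃ = −(i/2)·diag(p₁,…,pₙ)`. -/
noncomputable def sutT3 (n : ℕ) [NeZero n] (p : Fin n → ℝ) :
    Matrix (Fin n) (Fin n) ℂ :=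
  (-(Complex.I / 2)) • Matrix.diagonal fun i => (p i : ℂ)

/-!
`T₁+iT₂` is a weighted cyclic shift `P`, `T₁−iT₂ = -Pᵀ`, and `-2iζT₃ = -ζ·diag(p)`, so
`A(ζ) = P - ζ·diag(p) - ζ²·Pᵀ`. The products `P²`, `(Pᵀ)²`, `P·diag(p)`, `diag(p)·Pᵀ` shift
indices by `±2` or `±1`, which is nonzero mod `n` once `n ≥ 3`, so their traces vanish.
Only `Tr(diag(p)²) = Σ pᵢ²` and `Tr(P·(-Pᵀ)) = -Σ exp(qᵢ - qᵢ₊₁)` survive, both with the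
factor `ζ²`.
-/

namespace Fin

variable {n : ℕ} [NeZero n]

lemma add_one_ne_self_of_two_le (hn : 2 ≤ n) (i : Fin n) : i + 1 ≠ i := by
  rw [Ne, add_eq_left, Fin.ext_iff, Fin.val_one', Fin.val_zero, Nat.mod_eq_of_lt hn]
  exact one_ne_zero

lemma add_one_add_one_ne_self (hn : 3 ≤ n) (i : Fin n) : i + 1 + 1 ≠ i := by
  rw [Ne, add_assoc, add_eq_left, Fin.ext_iff, Fin.val_add, Fin.val_one', Fin.val_zero,
    Nat.mod_eq_of_lt (by omega : 1 < n), Nat.mod_eq_of_lt hn]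
  exact two_ne_zero

end Fin

namespace Matrix

variable {n : ℕ} [NeZero n] {R : Type*}

def cyclicShift [Zero R] (w : Fin n → R) : Matrix (Fin n) (Fin n) R :=
  of fun i j => if j = i + 1 then w i else 0

variable [CommSemiring R]

lemma cyclicShift_apply_self (hn : 2 ≤ n) (w : Fin n → R) (i : Fin n) : cyclicShift w i i = 0 :=
  if_neg (Fin.add_one_ne_self_of_two_le hn i).symm

lemma trace_cyclicShift_mul_diagonal (hn : 2 ≤ n) (w d : Fin n → R) :
    trace (cyclicShift w * diagonal d) = 0 := by
  simp [trace, mul_diagonal, cyclicShift_apply_self hn]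

lemma trace_cyclicShift_mul_cyclicShift (hn : 3 ≤ n) (w v : Fin n → R) :
    trace (cyclicShift w * cyclicShift v) = 0 := by
  simp only [trace, diag, mul_apply]
  refine Finset.sum_eq_zero fun i _ => Finset.sum_eq_zero fun j _ => ?_
  simp only [cyclicShift, of_apply, ite_mul, mul_ite, mul_zero, zero_mul]
  split_ifs with hi hj
  · exact absurd (hi.trans (congrArg (· + 1) hj)) (Fin.add_one_add_one_ne_self hn i).symm
  all_goals rfl

lemma trace_cyclicShift_mul_transpose (w v : Fin n → R) :
    trace (cyclicShift w * (cyclicShift v)ᵀ) = ∑ i, w i * v i := by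
  simp [trace, mul_apply, cyclicShift]

lemma trace_sq_add_add {m : Type*} [Fintype m] [DecidableEq m] (X Y Z : Matrix m m R) :
    trace ((X + Y + Z) ^ 2) = trace (X * X) + trace (Y * Y) + trace (Z * Z)
      + 2 * (trace (X * Y) + trace (X * Z) + trace (Y * Z)) := by
  simp only [sq, add_mul, mul_add, trace_add, trace_mul_comm Y X, trace_mul_comm Z X,
    trace_mul_comm Z Y]
  ring

end Matrix

section Sutcliffe

variable {n : ℕ} [NeZero n]

lemma sutTplus_eq_cyclicShift (q : Fin n → ℝ) :
    sutTplus n q = cyclicShift fun i => (Real.exp ((q i - q (i + 1)) / 2) : ℂ) :=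
  rfl

lemma trace_sutTplus_mul_self (hn : 3 ≤ n) (q : Fin n → ℝ) :
    trace (sutTplus n q * sutTplus n q) = 0 :=
  trace_cyclicShift_mul_cyclicShift hn _ _

lemma trace_sutTminus_mul_self (hn : 3 ≤ n) (q : Fin n → ℝ) :
    trace (sutTminus n q * sutTminus n q) = 0 := by
  rw [sutTminus, neg_mul_neg, ← transpose_mul, trace_transpose, trace_sutTplus_mul_self hn]

lemma trace_sutTplus_mul_diagonal (hn : 3 ≤ n) (q : Fin n → ℝ) (d : Fin n → ℂ) :
    trace (sutTplus n q * diagonal d) = 0 :=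
  trace_cyclicShift_mul_diagonal (by omega) _ _

lemma trace_diagonal_mul_sutTminus (hn : 3 ≤ n) (q : Fin n → ℝ) (d : Fin n → ℂ) :
    trace (diagonal d * sutTminus n q) = 0 := by
  rw [sutTminus, mul_neg, trace_neg, ← diagonal_transpose, ← transpose_mul, trace_transpose,
    trace_sutTplus_mul_diagonal hn, neg_zero]

lemma trace_sutTplus_mul_sutTminus (q : Fin n → ℝ) :
    trace (sutTplus n q * sutTminus n q) = -∑ i, (Real.exp (q i - q (i + 1)) : ℂ) := by
  rw [sutTminus, mul_neg, trace_neg, sutTplus_eq_cyclicShift, trace_cyclicShift_mul_transpose]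
  congr 2 with i
  rw [← Complex.ofReal_mul, ← Real.exp_add, add_halves]

lemma smul_sutT3 (p : Fin n → ℝ) (ζ : ℂ) :
    (2 * I * ζ) • sutT3 n p = ζ • diagonal fun i => (p i : ℂ) := by
  rw [sutT3, smul_smul]
  congr 1
  linear_combination (-ζ) * I_sq

end Sutcliffe

/-- For `n ≥ 3` and the Lax matrix `A(ζ) = (T₁+iT₂) − 2iT₃ζ + (T₁−iT₂)ζ²` built from the
Sutcliffe matrices, `(1/2)·Tr(A(ζ)²) = ζ²·H`, where `H` is the affine Toda Hamiltonian
`H = (1/2)Σᵢ pᵢ² − Σᵢ exp(qᵢ − q_{i+1})`. -/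
theorem stmt7 (n : ℕ) [NeZero n] (hn : 3 ≤ n) (p q : Fin n → ℝ) :
    ∀ ζ : ℂ,
      (1 / 2 : ℂ) * Matrix.trace
          ((sutTplus n q - (2 * Complex.I * ζ) • sutT3 n p + ζ ^ 2 • sutTminus n q) ^ 2)
        = ζ ^ 2 *
          (((1 / 2) * ∑ i, p i ^ 2 - ∑ i, Real.exp (q i - q (i + 1)) : ℝ) : ℂ) := by
  intro ζ
  rw [smul_sutT3, sub_eq_add_neg, ← neg_smul, trace_sq_add_add]
  simp only [Matrix.smul_mul, Matrix.mul_smul, trace_smul, smul_eq_mul, diagonal_mul_diagonal,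
    trace_diagonal, trace_sutTplus_mul_self hn, trace_sutTminus_mul_self hn, trace_sutTplus_mul_diagonal hn,
    trace_diagonal_mul_sutTminus hn, trace_sutTplus_mul_sutTminus]
  push_cast
  simp only [← sq]
  ring
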